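/- Let (∂, σ) be a right twisted multi-derivation on A in which σ is a diagonal matrix with diagonal entries σ₁, …, σ_n that are algebra automorphisms of A, so that each ∂_i satisfies ∂_i(ab) = ∂_i(a)σ_i(b) + a∂_i(b); then (∂, σ) is free with σ̄ = diag(σ₁⁻¹, …, σ_n⁻¹) and σ̂ = σ. If in addition there exist scalars q_i ∈ k with σ_i⁻¹ ∘ ∂_i ∘ σ_i = q_i ∂_i (each ∂_i is a q_i-skew derivation), then the unique hom-connection ∇ on A with respect to the induced calculus Ω¹(A) = A^n_σ satisfying ∇(ξ_i) = 0 is given by ∇(f) = Σ_i q_i ∂_i(f(ω_i)). -/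

import Mathlib

/-!
Because `σ` is diagonal, the right action on `Ω¹(A)` is `x · a = (x_i σ_i(a))_i`, so every
`f ∈ Hom_A(Ω¹(A), A)` satisfies `f(x) = Σ_i f(ω_i) σ_i⁻¹(x_i)` and decomposes as
`f = Σ_i ξ_i · σ_i(f(ω_i))`. The Leibniz rule for `∇` and `∇(ξ_i) = 0` therefore force
`∇(f) = Σ_i σ_i⁻¹(∂_i(σ_i(f(ω_i))))`; conversely, the twisted Leibniz rule for `∂_i` (which gives
`∂_i(1) = 0`) shows that this formula is a hom-connection vanishing on the `ξ_i`. The `q_i`-skew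
condition rewrites it as `Σ_i q_i ∂_i(f(ω_i))`.
-/

namespace Stmt10

variable {k A : Type*} [Field k] [Ring A] [Algebra k A] {n : ℕ}

/-- The freeness conditions for `(σ, σ̄, σ̂)`. -/
def IsFreePair (σ σbar σhat : A →ₐ[k] Matrix (Fin n) (Fin n) A) : Prop :=
  (∀ (i j : Fin n) (a : A),
      (∑ l, σbar (σ a j l) i l) = if i = j then a else 0) ∧
  (∀ (i j : Fin n) (a : A),
      (∑ l, σ (σbar a l j) l i) = if i = j then a else 0) ∧
  (∀ (i j : Fin n) (a : A),
      (∑ l, σhat (σbar a j l) i l) = if i = j then a else 0) ∧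
  (∀ (i j : Fin n) (a : A),
      (∑ l, σbar (σhat a l j) l i) = if i = j then a else 0)

/-- The diagonal algebra map `A → M_n(A)` associated with a family of algebra
automorphisms of `A`. -/
def diagAlg (s : Fin n → (A ≃ₐ[k] A)) : A →ₐ[k] Matrix (Fin n) (Fin n) A where
  toFun a := Matrix.diagonal fun i => s i a
  map_one' := by
    simp only [map_one]
    exact Matrix.diagonal_one
  map_mul' a b := by
    show Matrix.diagonal (fun i => s i (a * b))
        = Matrix.diagonal (fun i => s i a) * Matrix.diagonal (fun i => s i b)
    rw [Matrix.diagonal_mul_diagonal]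
    exact congrArg _ (funext fun i => map_mul (s i) a b)
  map_zero' := by
    simp only [map_zero]
    exact Matrix.diagonal_zero
  map_add' a b := by
    show Matrix.diagonal (fun i => s i (a + b))
        = Matrix.diagonal (fun i => s i a) + Matrix.diagonal (fun i => s i b)
    rw [Matrix.diagonal_add]
    exact congrArg _ (funext fun i => map_add (s i) a b)
  commutes' c := by
    show Matrix.diagonal (fun i => s i (algebraMap k A c)) = _
    have h : (fun i : Fin n => s i (algebraMap k A c)) = algebraMap k (Fin n → A) c := by
      funext i; simp [Pi.algebraMap_apply]
    rw [h, Matrix.algebraMap_eq_diagonal]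

variable (s : Fin n → (A ≃ₐ[k] A))

/-- Right `A`-action on `Ω¹(A) = A^n_σ` for diagonal `σ`. -/
def ract (x : Fin n → A) (a : A) : Fin n → A := fun i => ∑ j, x j * diagAlg s a j i

/-- Left multiplication on `Ω¹(A)` (coordinatewise). -/
def lmulPi (a : A) : (Fin n → A) →ₗ[k] (Fin n → A) where
  toFun x := fun i => a * x i
  map_add' x y := by funext i; simp [mul_add]
  map_smul' c x := by funext i; simp [mul_smul_comm]

/-- `Hom_A(Ω¹(A), A)`: right `A`-linear maps. -/
def homD : Submodule k ((Fin n → A) →ₗ[k] A) where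
  carrier := {f | ∀ (x : Fin n → A) (a : A), f (ract s x a) = f x * a}
  add_mem' {f g} hf hg := by
    intro x a
    simp only [LinearMap.add_apply, hf x a, hg x a, add_mul]
  zero_mem' := by intro x a; simp
  smul_mem' c f hf := by
    intro x a
    simp only [LinearMap.smul_apply, hf x a, smul_mul_assoc]

/-- The left basis `ω_i` of `Ω¹(A)`. -/
def om (i : Fin n) : Fin n → A := Pi.single i 1

lemma ract_lmulPi (a c : A) (x : Fin n → A) :
    ract s (lmulPi (k := k) a x) c = lmulPi (k := k) a (ract s x c) := by
  funext i
  simp [ract, lmulPi, Finset.mul_sum, mul_assoc]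

/-- The right action of `a : A` on `f ∈ Hom_A(Ω¹(A), A)`. -/
def rAct (f : homD s) (a : A) : homD s :=
  ⟨f.1 ∘ₗ lmulPi a, by
    intro x c
    simp only [LinearMap.comp_apply]
    rw [← ract_lmulPi, f.2 _ c]⟩

/-- `d : A → Ω¹(A)` in coordinates. -/
def dvec (del : Fin n → (A →ₗ[k] A)) (a : A) : Fin n → A := fun i => del i a

/-- Hom-connection property with vanishing on the dual basis. -/
def IsHomConnVanishing (del : Fin n → (A →ₗ[k] A)) (ξ : Fin n → homD s)
    (nabla : homD s →ₗ[k] A) : Prop :=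
  (∀ (f : homD s) (a : A),
      nabla (rAct s f a) = nabla f * a + f.1 (dvec del a)) ∧
  (∀ i, nabla (ξ i) = 0)


lemma diagAlg_apply (a : A) (i j : Fin n) :
    diagAlg s a i j = if i = j then s i a else 0 :=
  Matrix.diagonal_apply _ _ _

lemma isFreePair_diagAlg_symm :
    IsFreePair (diagAlg s) (diagAlg fun i => (s i).symm) (diagAlg s) := by
  refine ⟨fun i j a => ?_, fun i j a => ?_, fun i j a => ?_, fun i j a => ?_⟩ <;>
  · simp only [diagAlg_apply]
    rcases eq_or_ne i j with rfl | h
    · simp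
    · simp [h, Ne.symm h]

lemma ract_apply (x : Fin n → A) (a : A) (i : Fin n) :
    ract s x a i = x i * s i a := by
  simp [ract, diagAlg_apply, mul_ite]

lemma ract_om (a : A) (i : Fin n) : ract s (om i) a = Pi.single i (s i a) := by
  funext j
  rcases eq_or_ne j i with rfl | h
  · simp [ract_apply, om]
  · simp [ract_apply, om, h]

lemma sum_ract_om (x : Fin n → A) : ∑ i, ract s (om i) ((s i).symm (x i)) = x := by
  simp only [ract_om, AlgEquiv.apply_symm_apply, Finset.univ_sum_single]

lemma homD_apply (f : homD s) (x : Fin n → A) :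
    f.1 x = ∑ i, f.1 (om i) * (s i).symm (x i) := by
  conv_lhs => rw [← sum_ract_om s x]
  rw [map_sum]
  exact Finset.sum_congr rfl fun i _ => f.2 (om i) _

lemma homD_ext {f g : homD s} (h : ∀ i, f.1 (om i) = g.1 (om i)) : f = g :=
  Subtype.ext <| LinearMap.ext fun x => by simp only [homD_apply s _ x, h]

lemma rAct_apply (f : homD s) (a : A) (x : Fin n → A) :
    (rAct s f a).1 x = f.1 (lmulPi (k := k) a x) := rfl

lemma rAct_apply_om (f : homD s) (a : A) (i : Fin n) :
    (rAct s f a).1 (om i) = f.1 (om i) * (s i).symm a := by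
  rw [rAct_apply, homD_apply, Finset.sum_eq_single i]
  · simp [lmulPi, om]
  · intro j _ hj
    simp [lmulPi, om, hj]
  · simp

section DualBasis

variable {ξ : Fin n → homD s} (hξ : ∀ i j, (ξ i).1 (om j) = if i = j then (1 : A) else 0)
include hξ

lemma dualBasis_apply (i : Fin n) (x : Fin n → A) : (ξ i).1 x = (s i).symm (x i) := by
  simp [homD_apply s (ξ i) x, hξ]

lemma eq_sum_rAct_dualBasis (f : homD s) :
    f = ∑ i, rAct s (ξ i) (s i (f.1 (om i))) := by
  refine homD_ext s fun j => ?_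
  simp [LinearMap.sum_apply, rAct_apply_om, hξ]

end DualBasis

lemma map_one_eq_zero_of_twisted_leibniz {d : A →ₗ[k] A} {σ : A ≃ₐ[k] A}
    (hd : ∀ a b, d (a * b) = d a * σ b + a * d b) : d 1 = 0 := by
  simpa using hd 1 1

section HomConnection

variable (del : Fin n → (A →ₗ[k] A))

def canonicalHomConn : homD s →ₗ[k] A where
  toFun f := ∑ i, (s i).symm (del i (s i (f.1 (om i))))
  map_add' f g := by simp [Finset.sum_add_distrib]
  map_smul' c f := by simp [Finset.smul_sum]

lemma canonicalHomConn_apply (f : homD s) :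
    canonicalHomConn s del f = ∑ i, (s i).symm (del i (s i (f.1 (om i)))) := rfl

variable {s del}

lemma canonicalHomConn_rAct
    (hder : ∀ (a b : A) (i : Fin n), del i (a * b) = del i a * s i b + a * del i b)
    (f : homD s) (a : A) :
    canonicalHomConn s del (rAct s f a) = canonicalHomConn s del f * a + f.1 (dvec del a) := by
  have hterm : ∀ i, (s i).symm (del i (s i ((rAct s f a).1 (om i))))
      = (s i).symm (del i (s i (f.1 (om i)))) * a + f.1 (om i) * (s i).symm (del i a) := by
    intro i
    rw [rAct_apply_om, map_mul, AlgEquiv.apply_symm_apply, hder, map_add, map_mul, map_mul,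
      AlgEquiv.symm_apply_apply, AlgEquiv.symm_apply_apply]
  rw [canonicalHomConn_apply, canonicalHomConn_apply, homD_apply s f (dvec del a),
    Finset.sum_mul, ← Finset.sum_add_distrib]
  exact Finset.sum_congr rfl fun i _ => hterm i

variable {ξ : Fin n → homD s} (hξ : ∀ i j, (ξ i).1 (om j) = if i = j then (1 : A) else 0)
include hξ

lemma isHomConnVanishing_canonicalHomConn
    (hder : ∀ (a b : A) (i : Fin n), del i (a * b) = del i a * s i b + a * del i b) :
    IsHomConnVanishing s del ξ (canonicalHomConn s del) := by
  refine ⟨canonicalHomConn_rAct hder, fun i => ?_⟩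
  refine (canonicalHomConn_apply s del _).trans (Finset.sum_eq_zero fun j _ => ?_)
  rw [hξ]
  split_ifs
  · rw [map_one, map_one_eq_zero_of_twisted_leibniz (fun a b => hder a b j), map_zero]
  · simp

lemma IsHomConnVanishing.eq_canonicalHomConn {nabla : homD s →ₗ[k] A}
    (h : IsHomConnVanishing s del ξ nabla) : nabla = canonicalHomConn s del := by
  obtain ⟨hleibniz, hvanish⟩ := h
  refine LinearMap.ext fun f => ?_
  calc nabla f = ∑ i, nabla (rAct s (ξ i) (s i (f.1 (om i)))) := by
        rw [← map_sum, ← eq_sum_rAct_dualBasis s hξ]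
    _ = canonicalHomConn s del f := by
        refine Finset.sum_congr rfl fun i _ => ?_
        rw [hleibniz, hvanish, zero_mul, zero_add, dualBasis_apply s hξ]
        rfl

end HomConnection

lemma canonicalHomConn_eq_of_skew {del : Fin n → (A →ₗ[k] A)} {q : Fin n → k}
    (hskew : ∀ (i : Fin n) (a : A), (s i).symm (del i (s i a)) = q i • del i a) (f : homD s) :
    canonicalHomConn s del f = ∑ i, q i • del i (f.1 (om i)) := by
  simp only [canonicalHomConn_apply, hskew]

/--
Let `(∂, σ)` be a right twisted multi-derivation with diagonal
`σ = diag(σ₁, …, σ_n)` given by algebra automorphisms, so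
`∂_i(ab) = ∂_i(a)σ_i(b) + a∂_i(b)`.  Then `(∂, σ)` is free with
`σ̄ = diag(σ₁⁻¹, …, σ_n⁻¹)` and `σ̂ = σ`.  If in addition each `∂_i` is a
`q_i`-skew derivation, i.e. `σ_i⁻¹(∂_i(σ_i(a))) = q_i ∂_i(a)`, then the unique
hom-connection `∇` with `∇(ξ_i) = 0` is given by `∇(f) = Σ_i q_i ∂_i(f(ω_i))`.
-/
theorem diagonal_case
    (del : Fin n → (A →ₗ[k] A))
    (hder : ∀ (a b : A) (i : Fin n),
      del i (a * b) = del i a * s i b + a * del i b)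
    (q : Fin n → k)
    (hskew : ∀ (i : Fin n) (a : A), (s i).symm (del i (s i a)) = q i • del i a)
    (ξ : Fin n → homD s)
    (hξ : ∀ i j, (ξ i).1 (om j) = if i = j then (1 : A) else 0) :
    IsFreePair (diagAlg s) (diagAlg fun i => (s i).symm) (diagAlg s) ∧
    (∃! nabla : homD s →ₗ[k] A, IsHomConnVanishing s del ξ nabla) ∧
    (∀ nabla : homD s →ₗ[k] A, IsHomConnVanishing s del ξ nabla →
      ∀ f : homD s, nabla f = ∑ i, q i • del i (f.1 (om i))) := by
  refine ⟨isFreePair_diagAlg_symm s,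
    ⟨canonicalHomConn s del, isHomConnVanishing_canonicalHomConn hξ hder,
      fun _ h => h.eq_canonicalHomConn hξ⟩, fun nabla h f => ?_⟩
  rw [h.eq_canonicalHomConn hξ, canonicalHomConn_eq_of_skew s hskew]

end Stmt10
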